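/- arXiv:2412.07120 — 2 statements merged into one kernel-verified Lean document; each statement's English description precedes it below -/
import Mathlib

section
/- Let d ≥ 2, T ≥ 1, let φ(x) = −Σ_{k=1}^d log(x(k)) be the log-barrier on the interior of Δ_d, let η^(1) ≥ ⋯ ≥ η^(T+1) > 0 be nonincreasing, let ℓ^(1),…,ℓ^(T), m^(1),…,m^(T+1) ∈ ℝ^d, and for each t = 1,…,T+1 let x^(t) be the minimizer over Δ_d of x ↦ ⟨x, m^(t) + Σ_{s=1}^{t−1} ℓ^(s)⟩ + φ(x)/η^(t). Suppose ‖x^(t+1) − x^(t)‖_{x^(t),φ} ≤ 1/2 for every t = 1,…,T. Then for every x* ∈ Δ_d: Σ_{t=1}^T ⟨x^(t) − x*, ℓ^(t)⟩ ≤ (d log T)/η^(T+1) + 4 Σ_{t=1}^T η^(t) ‖ℓ^(t) − m^(t)‖_{*,x^(t),φ}² − Σ_{t=1}^T (1/(16η^(t))) ‖x^(t+1) − x^(t)‖_{x^(t),φ}² + 6L, where L = max{ max_{1≤t≤T} ‖ℓ^(t)‖_∞, max_{1≤t≤T+1} ‖m^(t)‖_∞ }. -/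
open Finset

noncomputable section

/-- The `(d-1)`-dimensional probability simplex in `ℝ^d`. -/
def simplex (d : ℕ) : Set (Fin d → ℝ) :=
  {x | (∀ k, 0 ≤ x k) ∧ ∑ k, x k = 1}

/-- Standard inner product on `ℝ^d`. -/
def inp {d : ℕ} (u v : Fin d → ℝ) : ℝ := ∑ k, u k * v k

/-- `ℓ¹` norm. -/
def l1 {d : ℕ} (v : Fin d → ℝ) : ℝ := ∑ k, |v k|

/-- `ℓ∞` norm. -/
def linf {d : ℕ} (v : Fin d → ℝ) : ℝ := ⨆ k, |v k|

/-- Matrix-vector product `A y`. -/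
def mvec {d e : ℕ} (A : Fin d → Fin e → ℝ) (v : Fin e → ℝ) : Fin d → ℝ :=
  fun i => ∑ j, A i j * v j

/-- Transposed matrix-vector product `Aᵀ x`. -/
def tvec {d e : ℕ} (A : Fin d → Fin e → ℝ) (v : Fin d → ℝ) : Fin e → ℝ :=
  fun j => ∑ i, A i j * v i

/-- Row-stochastic matrices. -/
def rowStoch {m : ℕ} (M : Fin m → Fin m → ℝ) : Prop :=
  ∀ a, M a ∈ simplex m

/-- Shannon entropy. -/
def shannonH {d : ℕ} (x : Fin d → ℝ) : ℝ := ∑ k, x k * Real.log (1 / x k)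

/-- Log-barrier regularizer. -/
def logBarrier {d : ℕ} (x : Fin d → ℝ) : ℝ := -∑ k, Real.log (x k)

/-- Local norm `‖h‖_{x,φ}` induced by the Hessian of the log-barrier at `x`. -/
def locNorm {d : ℕ} (x h : Fin d → ℝ) : ℝ := Real.sqrt (∑ k, (h k) ^ 2 / (x k) ^ 2)

/-- Dual local norm `‖h‖_{*,x,φ}` for the log-barrier at `x`. -/
def dualLocNorm {d : ℕ} (x h : Fin d → ℝ) : ℝ := Real.sqrt (∑ k, (x k) ^ 2 * (h k) ^ 2)

/-- `log₊ z = max (log z) 4`. -/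
def logp (z : ℕ) : ℝ := max (Real.log z) 4

/-!
Write `G t` for the cumulative loss before round `t` and use the potential
`Φ t = ⟨x t, G t⟩ + (φ (x t) - d log d) / η t`. Inside the Dikin ellipsoid of radius `1/2` the
log-barrier is strongly convex in the local norm, because `log (1 + r) ≤ r - 3 r² / 16` for
`|r| ≤ 1/2`; with the first-order optimality of `x t` this gives
`F_t (x t) + 3 ‖x (t+1) - x t‖² / (16 η t) ≤ F_t (x (t+1))` for the round-`t` objective `F_t`.
Together with `⟨x t - x (t+1), ℓ t - m t⟩ ≤ ‖x (t+1) - x t‖ ‖ℓ t - m t‖_*` and AM-GM, every round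
satisfies `⟨x t, ℓ t⟩ + Φ t - Φ (t+1) ≤ 2 η t ‖ℓ t - m t‖²_* - ‖x (t+1) - x t‖² / (16 η t)`; the
decreasing learning rate costs nothing because `φ ≥ d log d` on the simplex. Telescoping,
`Φ 1 ≥ 0`, and the optimality of `x (T+1)` against the interior comparator
`(1 - 1/T) xs + 1/(T d)`, whose barrier is at most `d log d + d log T` and which lies at
`ℓ¹`-distance `2/T` from `xs`, leave `d log T / η (T+1)` and `4 L`.
-/

section Vectors

variable {d : ℕ}

theorem inp_eq_dotProduct (u v : Fin d → ℝ) : inp u v = u ⬝ᵥ v := rfl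

theorem simplex_eq_stdSimplex (d : ℕ) : simplex d = stdSimplex ℝ (Fin d) := rfl

theorem abs_le_linf (v : Fin d → ℝ) (k : Fin d) : |v k| ≤ linf v :=
  le_ciSup (f := fun k => |v k|) (Set.finite_range _).bddAbove k

theorem inp_le_l1_mul {v w : Fin d → ℝ} {M : ℝ} (hw : ∀ k, |w k| ≤ M) :
    inp v w ≤ l1 v * M := by
  rw [inp, l1, Finset.sum_mul]
  refine Finset.sum_le_sum fun k _ => ?_
  calc v k * w k ≤ |v k| * |w k| := (le_abs_self _).trans (abs_mul _ _).le
    _ ≤ |v k| * M := by gcongr; exact hw k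

theorem l1_sub_le_two {x y : Fin d → ℝ} (hx : x ∈ simplex d) (hy : y ∈ simplex d) :
    l1 (x - y) ≤ 2 := by
  calc l1 (x - y) ≤ ∑ k, (x k + y k) := by
        refine Finset.sum_le_sum fun k _ => ?_
        rw [Pi.sub_apply, abs_le]
        constructor <;> linarith [hx.1 k, hy.1 k]
    _ = 2 := by rw [Finset.sum_add_distrib, hx.2, hy.2]; norm_num

theorem locNorm_sq (x h : Fin d → ℝ) : locNorm x h ^ 2 = ∑ k, h k ^ 2 / x k ^ 2 :=
  Real.sq_sqrt (by positivity)

theorem locNorm_neg (x h : Fin d → ℝ) : locNorm x (-h) = locNorm x h := by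
  simp [locNorm]

theorem inp_le_locNorm_mul_dualLocNorm {x : Fin d → ℝ} (hx : ∀ k, 0 < x k) (v w : Fin d → ℝ) :
    inp v w ≤ locNorm x v * dualLocNorm x w := by
  have hsplit : inp v w = ∑ k, (v k / x k) * (x k * w k) :=
    Finset.sum_congr rfl fun k _ => by field_simp [(hx k).ne']
  rw [hsplit, locNorm, dualLocNorm]
  simpa [div_pow, mul_pow] using Real.sum_mul_le_sqrt_mul_sqrt Finset.univ
    (fun k => v k / x k) (fun k => x k * w k)

theorem abs_div_le_of_locNorm_le {x h : Fin d → ℝ} {r : ℝ} (hr : 0 ≤ r) (hh : locNorm x h ≤ r)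
    (k : Fin d) : |h k / x k| ≤ r := by
  have hsq : (h k / x k) ^ 2 ≤ r ^ 2 := calc
    (h k / x k) ^ 2 = h k ^ 2 / x k ^ 2 := div_pow _ _ _
    _ ≤ locNorm x h ^ 2 := locNorm_sq x h ▸ Finset.single_le_sum
        (f := fun k => h k ^ 2 / x k ^ 2) (fun _ _ => by positivity) (Finset.mem_univ k)
    _ ≤ r ^ 2 := pow_le_pow_left₀ (Real.sqrt_nonneg _) hh 2
  simpa [abs_of_nonneg hr] using sq_le_sq.1 hsq

end Vectors

theorem Real.log_one_add_le_sub_mul_sq {r : ℝ} (hr : |r| ≤ 1 / 2) :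
    Real.log (1 + r) ≤ r - 3 / 16 * r ^ 2 := by
  obtain ⟨hr₁, hr₂⟩ := abs_le.1 hr
  set u := r - 3 / 16 * r ^ 2 with hu_def
  -- `exp u = exp (u/2)^2 ≥ (1 + u/2)^2 ≥ 1 + r` on `|r| ≤ 1/2`
  have hexp : 1 + r ≤ Real.exp u := by
    have hhalf := Real.add_one_le_exp (u / 2)
    have hsq : Real.exp (u / 2) ^ 2 = Real.exp u := by rw [← Real.exp_nat_mul]; ring_nf
    have hu : 0 ≤ u / 2 + 1 := by rw [hu_def]; nlinarith
    nlinarith [pow_le_pow_left₀ hu hhalf 2]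
  exact (Real.log_le_iff_le_exp (by linarith)).2 hexp

section LogBarrier

variable {d : ℕ}

theorem mul_log_le_logBarrier {x : Fin d → ℝ} (hx : x ∈ simplex d) (hpos : ∀ k, 0 < x k) :
    d * Real.log d ≤ logBarrier x := by
  have hlog : ∀ k, Real.log (d * x k) = Real.log d + Real.log (x k) := fun k =>
    Real.log_mul (Nat.cast_pos.2 k.pos).ne' (hpos k).ne'
  have hsum : ∑ k, Real.log (d * x k) ≤ 0 := calc
    ∑ k, Real.log (d * x k) ≤ ∑ k, (d * x k - 1) := Finset.sum_le_sum fun k _ =>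
        Real.log_le_sub_one_of_pos (mul_pos (Nat.cast_pos.2 k.pos) (hpos k))
    _ = 0 := by simp [Finset.sum_sub_distrib, ← Finset.mul_sum, hx.2]
  simp only [hlog, Finset.sum_add_distrib, Finset.sum_const, Finset.card_univ, Fintype.card_fin,
    nsmul_eq_mul] at hsum
  rw [logBarrier]; linarith

theorem logBarrier_le_of_le {z : Fin d → ℝ} {a : ℝ} (ha : 0 < a) (hz : ∀ k, a ≤ z k) :
    logBarrier z ≤ -(d * Real.log a) := by
  have := Finset.sum_le_sum fun k (_ : k ∈ Finset.univ) => Real.log_le_log ha (hz k)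
  simp only [Finset.sum_const, Finset.card_univ, Fintype.card_fin, nsmul_eq_mul] at this
  rw [logBarrier]; linarith

theorem locNorm_sq_le_bregman_logBarrier {x y : Fin d → ℝ} (hx : ∀ k, 0 < x k)
    (hxy : locNorm x (y - x) ≤ 1 / 2) :
    3 / 16 * locNorm x (y - x) ^ 2 ≤ logBarrier y - logBarrier x + ∑ k, (y k - x k) / x k := by
  have hk : ∀ k, 3 / 16 * ((y k - x k) ^ 2 / x k ^ 2)
      ≤ (y k - x k) / x k - (Real.log (y k) - Real.log (x k)) := by
    intro k
    have hr : |(y k - x k) / x k| ≤ 1 / 2 := abs_div_le_of_locNorm_le (by norm_num) hxy k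
    have hy : y k = x k * (1 + (y k - x k) / x k) := by field_simp [(hx k).ne']; ring
    have hlog : Real.log (y k) - Real.log (x k) = Real.log (1 + (y k - x k) / x k) := by
      rw [hy, Real.log_mul (hx k).ne' (by linarith [(abs_le.1 hr).1]), ← hy]; ring
    rw [hlog, ← div_pow]
    linarith [Real.log_one_add_le_sub_mul_sq hr]
  calc 3 / 16 * locNorm x (y - x) ^ 2 = ∑ k, 3 / 16 * ((y k - x k) ^ 2 / x k ^ 2) := by
        rw [locNorm_sq, Finset.mul_sum]; rfl
    _ ≤ ∑ k, ((y k - x k) / x k - (Real.log (y k) - Real.log (x k))) :=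
        Finset.sum_le_sum fun k _ => hk k
    _ = logBarrier y - logBarrier x + ∑ k, (y k - x k) / x k := by
        simp only [logBarrier, Finset.sum_sub_distrib]; ring

end LogBarrier

theorem IsMinOn.hasDerivWithinAt_Icc_nonneg {f : ℝ → ℝ} {a b f' : ℝ} (hab : a < b)
    (hmin : IsMinOn f (Set.Icc a b) a) (hf : HasDerivWithinAt f f' (Set.Icc a b) a) :
    0 ≤ f' := by
  have hcone : b - a ∈ posTangentConeAt (Set.Icc a b) a :=
    sub_mem_posTangentConeAt_of_segment_subset (segment_eq_Icc hab.le).subset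
  have hslope : 0 ≤ (b - a) * f' := by simpa using hmin.localize.hasFDerivWithinAt_nonneg hf hcone
  exact nonneg_of_mul_nonneg_right hslope (sub_pos.2 hab)

section Objective

variable {d : ℕ}

def posSimplex (d : ℕ) : Set (Fin d → ℝ) := simplex d ∩ {x | ∀ k, 0 < x k}

theorem convex_posSimplex (d : ℕ) : Convex ℝ (posSimplex d) :=
  (simplex_eq_stdSimplex d ▸ convex_stdSimplex ℝ (Fin d)).inter fun _ hx _ hy a b ha hb hab k => by
    rcases ha.eq_or_lt with rfl | ha
    · simpa [(zero_add b).symm.trans hab] using hy k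
    · simpa using add_pos_of_pos_of_nonneg (mul_pos ha (hx k)) (mul_nonneg hb (hy k).le)

def barrierObjective (η : ℝ) (c z : Fin d → ℝ) : ℝ := inp z c + logBarrier z / η

theorem hasDerivAt_barrierObjective_line (η : ℝ) (c : Fin d → ℝ) {x : Fin d → ℝ}
    (hx : ∀ k, 0 < x k) (h : Fin d → ℝ) :
    HasDerivAt (fun s : ℝ => barrierObjective η c (x + s • h))
      (inp h c - (∑ k, h k / x k) / η) 0 := by
  have hline : ∀ k, HasDerivAt (fun s : ℝ => x k + s * h k) (h k) 0 := fun k => by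
    simpa using ((hasDerivAt_id (0 : ℝ)).mul_const (h k)).const_add (x k)
  have hinp : HasDerivAt (fun s : ℝ => ∑ k, (x k + s * h k) * c k) (inp h c) 0 :=
    HasDerivAt.fun_sum fun k _ => (hline k).mul_const (c k)
  have hlog : HasDerivAt (fun s : ℝ => ∑ k, Real.log (x k + s * h k)) (∑ k, h k / x k) 0 :=
    HasDerivAt.fun_sum fun k _ => by simpa using (hline k).log (by simpa using (hx k).ne')
  have hobj : (fun s : ℝ => barrierObjective η c (x + s • h))
      = fun s => ∑ k, (x k + s * h k) * c k + -(∑ k, Real.log (x k + s * h k)) / η := by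
    ext s
    simp [barrierObjective, inp, logBarrier]
  rw [hobj, sub_eq_add_neg, ← neg_div]
  exact hinp.add (hlog.neg.div_const η)

theorem IsMinOn.barrierObjective_first_order {η : ℝ} {c x y : Fin d → ℝ}
    (hmin : IsMinOn (barrierObjective η c) (posSimplex d) x) (hx : x ∈ posSimplex d)
    (hy : y ∈ posSimplex d) :
    (∑ k, (y k - x k) / x k) / η ≤ inp (y - x) c := by
  have hline : IsMinOn (fun s : ℝ => barrierObjective η c (x + s • (y - x))) (Set.Icc 0 1) 0 :=
    isMinOn_iff.2 fun s hs => by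
      simpa using isMinOn_iff.1 hmin _ ((convex_posSimplex d).add_smul_sub_mem hx hy hs)
  have := hline.hasDerivWithinAt_Icc_nonneg one_pos
    (hasDerivAt_barrierObjective_line η c hx.2 (y - x)).hasDerivWithinAt
  simpa using this

theorem IsMinOn.barrierObjective_add_locNorm_sq_le {η : ℝ} (hη : 0 < η) {c x y : Fin d → ℝ}
    (hmin : IsMinOn (barrierObjective η c) (posSimplex d) x) (hx : x ∈ posSimplex d)
    (hy : y ∈ posSimplex d) (hxy : locNorm x (y - x) ≤ 1 / 2) :
    barrierObjective η c x + 3 / 16 * locNorm x (y - x) ^ 2 / η ≤ barrierObjective η c y := by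
  have hfirst := hmin.barrierObjective_first_order hx hy
  have hbreg := div_le_div_of_nonneg_right (locNorm_sq_le_bregman_logBarrier hx.2 hxy) hη.le
  have hinp : inp (y - x) c = inp y c - inp x c := by
    simp [inp_eq_dotProduct, sub_dotProduct]
  rw [add_div, sub_div] at hbreg
  simp only [barrierObjective]
  linarith

end Objective

section Potential

variable {d : ℕ}

/-- `d log d` is the minimum of the log-barrier on the simplex, so the barrier term is
nonnegative and only grows when the learning rate decreases. -/
def barrierPotential (η : ℝ) (g x : Fin d → ℝ) : ℝ :=
  inp x g + (logBarrier x - d * Real.log d) / η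

theorem barrierPotential_zero_nonneg {η : ℝ} (hη : 0 < η) {x : Fin d → ℝ}
    (hx : x ∈ posSimplex d) : 0 ≤ barrierPotential η 0 x := by
  simpa [barrierPotential, inp] using
    div_nonneg (sub_nonneg.2 (mul_log_le_logBarrier hx.1 hx.2)) hη.le

theorem IsMinOn.barrierPotential_le {η L : ℝ} {g m x z : Fin d → ℝ}
    (hmin : IsMinOn (barrierObjective η (m + g)) (posSimplex d) x) (hx : x ∈ posSimplex d)
    (hz : z ∈ posSimplex d) (hm : ∀ k, |m k| ≤ L) :
    barrierPotential η g x ≤ barrierPotential η g z + 2 * L := by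
  have hxz : barrierObjective η (m + g) x ≤ barrierObjective η (m + g) z := isMinOn_iff.1 hmin z hz
  have hd : 0 < d := Nat.pos_of_ne_zero <| by rintro rfl; simpa using hx.1.2
  have hmL : inp (z - x) m ≤ 2 * L := calc
    inp (z - x) m ≤ l1 (z - x) * L := inp_le_l1_mul hm
    _ ≤ 2 * L := mul_le_mul_of_nonneg_right (l1_sub_le_two hz.1 hx.1)
        ((abs_nonneg _).trans (hm ⟨0, hd⟩))
  simp only [barrierObjective, barrierPotential, inp_eq_dotProduct, dotProduct_add,
    sub_dotProduct, sub_div] at hxz hmL ⊢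
  linarith

theorem oftrl_step {η η' : ℝ} (hη' : 0 < η') (hηη' : η' ≤ η) {g ℓ m x x' : Fin d → ℝ}
    (hmin : IsMinOn (barrierObjective η (m + g)) (posSimplex d) x) (hx : x ∈ posSimplex d)
    (hx' : x' ∈ posSimplex d) (hstab : locNorm x (x' - x) ≤ 1 / 2) :
    inp x ℓ + barrierPotential η g x - barrierPotential η' (g + ℓ) x'
      ≤ 2 * η * dualLocNorm x (ℓ - m) ^ 2 - 1 / (16 * η) * locNorm x (x' - x) ^ 2 := by
  have hη : 0 < η := hη'.trans_le hηη'
  set a := locNorm x (x' - x)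
  set b := dualLocNorm x (ℓ - m)
  have hstrong := hmin.barrierObjective_add_locNorm_sq_le hη hx hx' hstab
  have hrate : (logBarrier x' - d * Real.log d) / η ≤ (logBarrier x' - d * Real.log d) / η' :=
    div_le_div_of_nonneg_left (sub_nonneg.2 (mul_log_le_logBarrier hx'.1 hx'.2)) hη' hηη'
  have hcs : inp (x - x') (ℓ - m) ≤ a * b := by
    have hflip : locNorm x (x - x') = a := by rw [← neg_sub, locNorm_neg]
    exact hflip ▸ inp_le_locNorm_mul_dualLocNorm hx.2 (x - x') (ℓ - m)
  have hamgm : a * b ≤ a ^ 2 / (8 * η) + 2 * η * b ^ 2 := by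
    rw [div_add' _ _ _ (by positivity), le_div_iff₀ (by positivity)]
    nlinarith [sq_nonneg (a - 4 * η * b)]
  simp only [barrierObjective, barrierPotential, inp_eq_dotProduct, dotProduct_add,
    sub_dotProduct, dotProduct_sub, sub_div] at hstrong hrate hcs ⊢
  have : 1 / (16 * η) * a ^ 2 = 3 / 16 * a ^ 2 / η - a ^ 2 / (8 * η) := by field_simp; ring
  linarith

end Potential

section Comparator

variable {d : ℕ}

def mixUniform (ε : ℝ) (x : Fin d → ℝ) : Fin d → ℝ := fun k => (1 - ε) * x k + ε / d

variable {ε : ℝ} {x : Fin d → ℝ}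

theorem div_le_mixUniform (hε₁ : ε ≤ 1) (hx : x ∈ simplex d) (k : Fin d) :
    ε / d ≤ mixUniform ε x k :=
  le_add_of_nonneg_left (mul_nonneg (sub_nonneg.2 hε₁) (hx.1 k))

theorem mixUniform_mem_posSimplex (hε₀ : 0 < ε) (hε₁ : ε ≤ 1) (hx : x ∈ simplex d) :
    mixUniform ε x ∈ posSimplex d := by
  refine ⟨⟨fun k => ?_, ?_⟩, fun k => ?_⟩
  · exact (div_nonneg hε₀.le (Nat.cast_nonneg d)).trans (div_le_mixUniform hε₁ hx k)
  · have hd : (d : ℝ) ≠ 0 := Nat.cast_ne_zero.2 <| by rintro rfl; simpa using hx.2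
    simp [mixUniform, Finset.sum_add_distrib, ← Finset.mul_sum, hx.2, mul_div_cancel₀ _ hd]
  · exact (div_pos hε₀ (Nat.cast_pos.2 k.pos)).trans_le (div_le_mixUniform hε₁ hx k)

theorem logBarrier_mixUniform_le (hε₀ : 0 < ε) (hε₁ : ε ≤ 1) (hx : x ∈ simplex d) :
    logBarrier (mixUniform ε x) ≤ d * Real.log d + d * Real.log ε⁻¹ := by
  have hd : (0 : ℝ) < d := Nat.cast_pos.2 <| Nat.pos_of_ne_zero <| by rintro rfl; simpa using hx.2
  have := logBarrier_le_of_le (div_pos hε₀ hd) (div_le_mixUniform hε₁ hx)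
  rw [Real.log_div hε₀.ne' hd.ne', Real.log_inv] at *
  linarith

theorem barrierPotential_mixUniform_le {η : ℝ} (hη : 0 < η) (hε₀ : 0 < ε) (hε₁ : ε ≤ 1)
    (hx : x ∈ simplex d) (g : Fin d → ℝ) :
    barrierPotential η g (mixUniform ε x) ≤ inp (mixUniform ε x) g + d * Real.log ε⁻¹ / η := by
  rw [barrierPotential, add_le_add_iff_left]
  gcongr
  linarith [logBarrier_mixUniform_le hε₀ hε₁ hx]

theorem l1_mixUniform_sub_le (hε₀ : 0 ≤ ε) (hx : x ∈ simplex d) :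
    l1 (mixUniform ε x - x) ≤ 2 * ε := by
  calc l1 (mixUniform ε x - x) ≤ ∑ k, (ε * x k + ε / d) := by
        refine Finset.sum_le_sum fun k _ => ?_
        have : 0 ≤ ε * x k := mul_nonneg hε₀ (hx.1 k)
        rw [Pi.sub_apply, mixUniform, abs_le]
        constructor <;> nlinarith [div_nonneg hε₀ (Nat.cast_nonneg d)]
    _ = 2 * ε := by
        have hd : (d : ℝ) ≠ 0 := Nat.cast_ne_zero.2 <| by rintro rfl; simpa using hx.2
        simp [Finset.sum_add_distrib, ← Finset.mul_sum, hx.2, mul_div_cancel₀ _ hd]; ring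

theorem sum_inp_mixUniform_sub_le {ι : Type*} {s : Finset ι} {ℓ : ι → Fin d → ℝ} {L : ℝ}
    (hL : 0 ≤ L) (hℓ : ∀ t ∈ s, ∀ k, |ℓ t k| ≤ L) (hx : x ∈ simplex d) :
    ∑ t ∈ s, inp (mixUniform (#s : ℝ)⁻¹ x - x) (ℓ t) ≤ 2 * L := calc
  _ ≤ ∑ t ∈ s, 2 * (#s : ℝ)⁻¹ * L := sum_le_sum fun t ht => (inp_le_l1_mul (hℓ t ht)).trans
      (mul_le_mul_of_nonneg_right (l1_mixUniform_sub_le (by positivity) hx) hL)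
  _ ≤ 2 * L := by
      rw [sum_const, nsmul_eq_mul]
      rcases s.eq_empty_or_nonempty with rfl | hs
      · simpa using hL
      · exact le_of_eq (by field_simp [hs.card_pos.ne'])

end Comparator

theorem sum_le_of_potential_step {a b Φ : ℕ → ℝ} {T : ℕ} (hT : 1 ≤ T)
    (h : ∀ t ∈ Icc 1 T, a t + Φ t - Φ (t + 1) ≤ b t) :
    ∑ t ∈ Icc 1 T, a t ≤ Φ (T + 1) - Φ 1 + ∑ t ∈ Icc 1 T, b t := by
  have := sum_le_sum h
  rw [← sum_Icc_sub hT]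
  simp only [add_sub_assoc, sum_add_distrib, sum_sub_distrib] at this ⊢
  linarith

section Trajectory

variable {d : ℕ}

def cumLoss (ℓ : ℕ → Fin d → ℝ) (t : ℕ) : Fin d → ℝ := ∑ s ∈ Icc 1 (t - 1), ℓ s

theorem cumLoss_one (ℓ : ℕ → Fin d → ℝ) : cumLoss ℓ 1 = 0 := by simp [cumLoss]

theorem cumLoss_succ (ℓ : ℕ → Fin d → ℝ) {t : ℕ} (ht : 1 ≤ t) :
    cumLoss ℓ (t + 1) = cumLoss ℓ t + ℓ t := by
  obtain ⟨n, rfl⟩ := Nat.exists_eq_add_of_le' ht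
  simp [cumLoss, sum_Icc_succ_top]

theorem oftrl_sum_inp_le {T : ℕ} (hT : 1 ≤ T) {η : ℕ → ℝ} {ℓ m x : ℕ → Fin d → ℝ}
    (hη : ∀ t ∈ Icc 1 (T + 1), 0 < η t) (hηmono : ∀ t ∈ Icc 1 T, η (t + 1) ≤ η t)
    (hplay : ∀ t ∈ Icc 1 (T + 1), x t ∈ posSimplex d ∧
      IsMinOn (barrierObjective (η t) (m t + cumLoss ℓ t)) (posSimplex d) (x t))
    (hstab : ∀ t ∈ Icc 1 T, locNorm (x t) (x (t + 1) - x t) ≤ 1 / 2) :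
    ∑ t ∈ Icc 1 T, inp (x t) (ℓ t)
      ≤ barrierPotential (η (T + 1)) (cumLoss ℓ (T + 1)) (x (T + 1))
        + 2 * ∑ t ∈ Icc 1 T, η t * dualLocNorm (x t) (ℓ t - m t) ^ 2
        - ∑ t ∈ Icc 1 T, 1 / (16 * η t) * locNorm (x t) (x (t + 1) - x t) ^ 2 := by
  have hmem {t} (h₁ : 1 ≤ t) (h₂ : t ≤ T + 1) : t ∈ Icc 1 (T + 1) := mem_Icc.2 ⟨h₁, h₂⟩
  have hsum := sum_le_of_potential_step hT (a := fun t => inp (x t) (ℓ t))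
    (Φ := fun t => barrierPotential (η t) (cumLoss ℓ t) (x t))
    (b := fun t => 2 * (η t * dualLocNorm (x t) (ℓ t - m t) ^ 2)
      - 1 / (16 * η t) * locNorm (x t) (x (t + 1) - x t) ^ 2) fun t ht => by
    obtain ⟨ht₁, htT⟩ := mem_Icc.1 ht
    have hstep := oftrl_step (ℓ := ℓ t) (hη _ (hmem (by omega) (by omega))) (hηmono t ht)
      (hplay t (hmem ht₁ (by omega))).2 (hplay t (hmem ht₁ (by omega))).1
      (hplay _ (hmem (by omega) (by omega))).1 (hstab t ht)
    rw [← cumLoss_succ ℓ ht₁, mul_assoc] at hstep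
    exact hstep
  have hΦ₁ := barrierPotential_zero_nonneg (hη 1 (hmem le_rfl (by omega)))
    (hplay 1 (hmem le_rfl (by omega))).1
  rw [← cumLoss_one ℓ] at hΦ₁
  rw [sum_sub_distrib, ← mul_sum] at hsum
  linarith

end Trajectory

/-- RVU bound for optimistic FTRL with the log-barrier regularizer and
an adaptive (nonincreasing) learning rate (Lemma `oftrl_logbarrier`). -/
theorem oftrl_logbarrier_rvu
    (d T : ℕ) (hd : 2 ≤ d) (hT : 1 ≤ T)
    (η : ℕ → ℝ)
    (hηpos : ∀ t ∈ Finset.Icc 1 (T + 1), 0 < η t)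
    (hηmono : ∀ t ∈ Finset.Icc 1 T, η (t + 1) ≤ η t)
    (ℓ mp : ℕ → Fin d → ℝ)
    (x : ℕ → Fin d → ℝ)
    (hx : ∀ t ∈ Finset.Icc 1 (T + 1), x t ∈ simplex d ∧ (∀ k, 0 < x t k) ∧
      ∀ z ∈ simplex d, (∀ k, 0 < z k) →
        inp (x t) (mp t + ∑ s ∈ Finset.Icc 1 (t - 1), ℓ s) + logBarrier (x t) / η t
          ≤ inp z (mp t + ∑ s ∈ Finset.Icc 1 (t - 1), ℓ s) + logBarrier z / η t)
    (hstab : ∀ t ∈ Finset.Icc 1 T, locNorm (x t) (x (t + 1) - x t) ≤ 1 / 2)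
    (L : ℝ)
    (hL : L = max
      ((Finset.Icc 1 T).sup' (Finset.nonempty_Icc.mpr hT) fun t => linf (ℓ t))
      ((Finset.Icc 1 (T + 1)).sup' (Finset.nonempty_Icc.mpr (Nat.le_add_left 1 T))
        fun t => linf (mp t))) :
    ∀ xs ∈ simplex d,
      ∑ t ∈ Finset.Icc 1 T, inp (x t - xs) (ℓ t)
        ≤ (d : ℝ) * Real.log T / η (T + 1)
          + 4 * (∑ t ∈ Finset.Icc 1 T, η t * (dualLocNorm (x t) (ℓ t - mp t)) ^ 2)
          - (∑ t ∈ Finset.Icc 1 T, (1 / (16 * η t)) * (locNorm (x t) (x (t + 1) - x t)) ^ 2)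
          + 6 * L := by
  intro xs hxs
  have hℓ (t) (ht : t ∈ Icc 1 T) (k) : |ℓ t k| ≤ L :=
    (abs_le_linf _ k).trans (hL ▸ le_max_of_le_left (le_sup' (fun t => linf (ℓ t)) ht))
  have hm (t) (ht : t ∈ Icc 1 (T + 1)) (k) : |mp t k| ≤ L :=
    (abs_le_linf _ k).trans (hL ▸ le_max_of_le_right (le_sup' (fun t => linf (mp t)) ht))
  have hL0 : 0 ≤ L := (abs_nonneg _).trans (hℓ 1 (mem_Icc.2 ⟨le_rfl, hT⟩) ⟨0, by omega⟩)
  have hplay (t) (ht : t ∈ Icc 1 (T + 1)) : x t ∈ posSimplex d ∧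
      IsMinOn (barrierObjective (η t) (mp t + cumLoss ℓ t)) (posSimplex d) (x t) :=
    ⟨⟨(hx t ht).1, (hx t ht).2.1⟩, isMinOn_iff.2 fun z hz => (hx t ht).2.2 z hz.1 hz.2⟩
  have hregret := oftrl_sum_inp_le hT hηpos hηmono hplay hstab
  have hlast : T + 1 ∈ Icc 1 (T + 1) := mem_Icc.2 ⟨by omega, le_rfl⟩
  have hε : (0 : ℝ) < (T : ℝ)⁻¹ := by positivity
  have hε₁ : (T : ℝ)⁻¹ ≤ 1 := inv_le_one_of_one_le₀ (by exact_mod_cast hT)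
  have hΦlast := (hplay _ hlast).2.barrierPotential_le (hplay _ hlast).1
    (mixUniform_mem_posSimplex hε hε₁ hxs) (hm _ hlast)
  have hz := barrierPotential_mixUniform_le (hηpos _ hlast) hε hε₁ hxs (cumLoss ℓ (T + 1))
  have hswap := sum_inp_mixUniform_sub_le hL0 hℓ hxs
  have hdual : 0 ≤ ∑ t ∈ Icc 1 T, η t * dualLocNorm (x t) (ℓ t - mp t) ^ 2 :=
    sum_nonneg fun t ht => mul_nonneg (hηpos t (Icc_subset_Icc_right (by omega) ht)).le (sq_nonneg _)
  simp only [Nat.card_Icc, add_tsub_cancel_right] at hswap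
  simp only [cumLoss, add_tsub_cancel_right, inv_inv, inp_eq_dotProduct, dotProduct_sum,
    sub_dotProduct, sum_sub_distrib] at hregret hΦlast hz hswap ⊢
  linarith
end
end

section
/- Let n ≥ 1, m ≥ 1, T ≥ 2. Let ũ^(1),…,ũ^(T) ∈ ℝ^m with ‖ũ^(s)‖_∞ ≤ 1 for all s, let x̂^(1),…,x̂^(T) ∈ Δ_m with the conventions x̂^(0) = 0 ∈ ℝ^m and ũ_a^(0) = 0, and for an action a ∈ {1,…,m} define ũ_a^(s) = x̂^(s)(a) · ũ^(s) and the learning rate η_a^(t) = min{ √( (m log T / 8) / ( 4 + Σ_{s=1}^{t−1} ‖ũ_a^(s) − ũ_a^(s−1)‖_∞² ) ), 1/(256 n √m) }. Then for every t ≥ 2: 1/η_a^(t) − 1/η_a^(t−1) ≤ √8 · ( x̂^(t−1)(a) + x̂^(t−2)(a) ) / √(m log T). -/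
/-! Writing `S` for the accumulated squared variation and `C = m log T / 8`, the reciprocal
learning rate is `max (√((4 + S) / C)) (256 n √m)`. Taking a maximum with a constant is
1-Lipschitz, and `√` has slope at most `1/4` on `[4, ∞)`, so one more round with variation `D`
raises `1/η` by at most `D² / (4 √C)`. Finally `D ≤ x̂⁽ᵗ⁻¹⁾(a) + x̂⁽ᵗ⁻²⁾(a) ≤ 2`, whence
`D² / 4 ≤ x̂⁽ᵗ⁻¹⁾(a) + x̂⁽ᵗ⁻²⁾(a)`. -/

open Finset

noncomputable section

lemma linf_eq_norm {d : ℕ} (v : Fin d → ℝ) : linf v = ‖v‖ := by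
  have hnonneg : 0 ≤ linf v := Real.iSup_nonneg fun k => abs_nonneg (v k)
  refine le_antisymm (Real.iSup_le (fun k => norm_le_pi_norm v k) (norm_nonneg v)) ?_
  exact (pi_norm_le_iff_of_nonneg hnonneg).2 fun k =>
    le_ciSup (Set.finite_range fun k => |v k|).bddAbove k

lemma linf_nonneg {d : ℕ} (v : Fin d → ℝ) : 0 ≤ linf v :=
  linf_eq_norm v ▸ norm_nonneg v

lemma linf_sub_le {d : ℕ} (u v : Fin d → ℝ) : linf (u - v) ≤ linf u + linf v := by
  simpa only [linf_eq_norm] using norm_sub_le u v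

lemma linf_smul_le {d : ℕ} {p : ℝ} {w : Fin d → ℝ} (hp : 0 ≤ p) (hw : linf w ≤ 1) :
    linf (p • w) ≤ p := by
  rw [linf_eq_norm, norm_smul, Real.norm_of_nonneg hp]
  exact mul_le_of_le_one_right hp (linf_eq_norm w ▸ hw)

lemma le_one_of_mem_simplex {d : ℕ} {x : Fin d → ℝ} (hx : x ∈ simplex d) (k : Fin d) :
    x k ≤ 1 :=
  hx.2 ▸ Finset.single_le_sum (fun j _ => hx.1 j) (Finset.mem_univ k)

lemma one_div_min_of_pos {α : Type*} [Field α] [LinearOrder α] [IsStrictOrderedRing α]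
    {a b : α} (ha : 0 < a) (hb : 0 < b) : 1 / min a b = max (1 / a) (1 / b) := by
  rcases le_total a b with h | h
  · rw [min_eq_left h, max_eq_left (one_div_le_one_div_of_le ha h)]
  · rw [min_eq_right h, max_eq_right (one_div_le_one_div_of_le hb h)]

lemma sqrt_add_le_sqrt_add_div {x y : ℝ} (hx : 0 < x) (hy : 0 ≤ y) :
    √(x + y) ≤ √x + y / (2 * √x) := by
  have hsx : 0 < √x := Real.sqrt_pos.2 hx
  rw [Real.sqrt_le_left (by positivity)]
  have hsq : (√x + y / (2 * √x)) ^ 2 = x + y + (y / (2 * √x)) ^ 2 := by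
    field_simp
    rw [Real.sq_sqrt hx.le]
    ring
  nlinarith [sq_nonneg (y / (2 * √x))]

lemma one_div_min_sqrt_sub_le {K c S y : ℝ} (hK : 0 < K) (hc : 0 < c) (hS : 0 ≤ S)
    (hy : 0 ≤ y) :
    1 / min (√(K / 8 / (4 + (S + y)))) c - 1 / min (√(K / 8 / (4 + S))) c
      ≤ √8 * (y / 4) / √K := by
  have hC : 0 < √(K / 8) := Real.sqrt_pos.2 (by positivity)
  have hrec : ∀ x : ℝ, 0 < x → 1 / min (√(K / 8 / x)) c = max (√x / √(K / 8)) (1 / c) := by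
    intro x hx
    rw [one_div_min_of_pos (Real.sqrt_pos.2 (by positivity)) hc, Real.sqrt_div' _ hx.le,
      one_div_div]
  have h2 : 2 ≤ √(4 + S) := Real.le_sqrt_of_sq_le (by linarith)
  have hmono : √(4 + S) ≤ √(4 + (S + y)) := Real.sqrt_le_sqrt (by linarith)
  have htangent : √(4 + (S + y)) - √(4 + S) ≤ y / 4 := by
    have hslope : y / (2 * √(4 + S)) ≤ y / 4 := by gcongr; linarith
    linarith [add_assoc 4 S y ▸ sqrt_add_le_sqrt_add_div (x := 4 + S) (by linarith) hy]
  rw [hrec _ (by positivity), hrec _ (by positivity)]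
  calc max (√(4 + (S + y)) / √(K / 8)) (1 / c) - max (√(4 + S) / √(K / 8)) (1 / c)
      ≤ |√(4 + (S + y)) / √(K / 8) - √(4 + S) / √(K / 8)| :=
        (le_abs_self _).trans (abs_max_sub_max_le_abs _ _ _)
    _ = (√(4 + (S + y)) - √(4 + S)) / √(K / 8) := by
        rw [← sub_div, abs_of_nonneg (div_nonneg (sub_nonneg.2 hmono) hC.le)]
    _ ≤ (y / 4) / √(K / 8) := by gcongr
    _ = √8 * (y / 4) / √K := by
        rw [Real.sqrt_div' _ (by norm_num : (0 : ℝ) ≤ 8)]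
        field_simp

theorem learning_rate_reciprocal_increase_general
    (n m T : ℕ) (hn : 1 ≤ n) (hT : 2 ≤ T)
    (ut : ℕ → Fin m → ℝ) (hut : ∀ s ∈ Finset.Icc 1 T, linf (ut s) ≤ 1)
    (xhat : ℕ → Fin m → ℝ)
    (hxhat : ∀ t ∈ Finset.Icc 1 T, xhat t ∈ simplex m)
    (hxhat0 : xhat 0 = 0)
    (a : Fin m)
    (ua : ℕ → Fin m → ℝ) (hua : ∀ s, ua s = xhat s a • ut s)
    (η : ℕ → ℝ)
    (hη : ∀ t, η t = min
      (Real.sqrt (((m : ℝ) * Real.log T / 8) /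
        (4 + ∑ s ∈ Finset.Icc 1 (t - 1), (linf (ua s - ua (s - 1))) ^ 2)))
      (1 / (256 * (n : ℝ) * Real.sqrt m))) :
    ∀ t ∈ Finset.Icc 2 (T + 1),
      1 / η t - 1 / η (t - 1)
        ≤ Real.sqrt 8 * (xhat (t - 1) a + xhat (t - 2) a)
            / Real.sqrt ((m : ℝ) * Real.log T) := by
  intro t ht
  obtain ⟨r, rfl⟩ : ∃ r, t = r + 2 := ⟨t - 2, by grind⟩
  have hm : (0 : ℝ) < m := Nat.cast_pos.2 a.pos
  have hlogT : 0 < Real.log T := Real.log_pos (by exact_mod_cast hT)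
  have hcoord : ∀ s ≤ T, 0 ≤ xhat s a ∧ xhat s a ≤ 1 ∧ linf (ua s) ≤ xhat s a := by
    intro s hs
    rcases Nat.eq_zero_or_pos s with rfl | hs0
    · simp [hua, hxhat0, linf_eq_norm]
    · have hsT : s ∈ Finset.Icc 1 T := Finset.mem_Icc.2 ⟨hs0, hs⟩
      have hx := hxhat s hsT
      exact ⟨hx.1 a, le_one_of_mem_simplex hx a, hua s ▸ linf_smul_le (hx.1 a) (hut s hsT)⟩
  obtain ⟨hp0, hp1, hp⟩ := hcoord (r + 1) (by grind)
  obtain ⟨hq0, hq1, hq⟩ := hcoord r (by grind)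
  have hD : linf (ua (r + 1) - ua r) ≤ xhat (r + 1) a + xhat r a :=
    (linf_sub_le _ _).trans (add_le_add hp hq)
  have hstep := one_div_min_sqrt_sub_le (mul_pos hm hlogT)
    (show 0 < 1 / (256 * (n : ℝ) * √m) by positivity)
    (Finset.sum_nonneg fun s _ => sq_nonneg (linf (ua s - ua (s - 1))) :
      0 ≤ ∑ s ∈ Finset.Icc 1 r, linf (ua s - ua (s - 1)) ^ 2)
    (sq_nonneg (linf (ua (r + 1) - ua r)))
  simp only [hη, Nat.reduceSubDiff, Nat.add_sub_cancel]
  rw [Finset.sum_Icc_succ_top (by omega), Nat.add_sub_cancel]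
  refine hstep.trans ?_
  gcongr
  nlinarith [linf_nonneg (ua (r + 1) - ua r)]

/-- bound on the increase of the reciprocal of the adaptive per-expert
learning rate (Lemma `lr_diff`). -/
theorem learning_rate_reciprocal_increase
    (n m T : ℕ) (hn : 1 ≤ n) (hm : 1 ≤ m) (hT : 2 ≤ T)
    (ut : ℕ → Fin m → ℝ) (hut : ∀ s ∈ Finset.Icc 1 T, linf (ut s) ≤ 1)
    (xhat : ℕ → Fin m → ℝ)
    (hxhat : ∀ t ∈ Finset.Icc 1 T, xhat t ∈ simplex m)
    (hxhat0 : xhat 0 = 0)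
    (a : Fin m)
    (ua : ℕ → Fin m → ℝ) (hua : ∀ s, ua s = xhat s a • ut s)
    (η : ℕ → ℝ)
    (hη : ∀ t, η t = min
      (Real.sqrt (((m : ℝ) * Real.log T / 8) /
        (4 + ∑ s ∈ Finset.Icc 1 (t - 1), (linf (ua s - ua (s - 1))) ^ 2)))
      (1 / (256 * (n : ℝ) * Real.sqrt m))) :
    ∀ t ∈ Finset.Icc 2 (T + 1),
      1 / η t - 1 / η (t - 1)
        ≤ Real.sqrt 8 * (xhat (t - 1) a + xhat (t - 2) a)
            / Real.sqrt ((m : ℝ) * Real.log T) :=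
  learning_rate_reciprocal_increase_general n m T hn hT ut hut xhat hxhat hxhat0 a ua hua η hη
end
end
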